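/- arXiv:2505.20440 — 2 statements merged into one kernel-verified Lean document; each statement's English description precedes it below -/
import Mathlib

section
/- Assume ‖ν(z)‖ = 1 for all z ∈ Γ, the Lipschitz hypothesis (Lip) with constant ℓ_ν > 0, the flatness hypothesis (Flat) with constant c_ν > 0, and the boundedness hypothesis (Bdd) with constant d > 0. Set c_p := (1 + 12 c_ν² d²)/(4π). Then for all indices i, j ∈ {1,2,3} and all x, y ∈ Γ with x ≠ y, |p(x,y) · q_{ij}(x,y)| ≤ 2 c_p ℓ_ν / ‖x − y‖². -/
open scoped RealInnerProductSpace

/-- The second mixed normal derivative of the Laplace fundamental solution: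
`p(x,y) = (ν(x)·ν(y))/(4π‖x−y‖³) − 3(ν(y)·(x−y))(ν(x)·(x−y))/(4π‖x−y‖⁵)`. -/
noncomputable def laplaceHyperKernel
    (ν : EuclideanSpace ℝ (Fin 3) → EuclideanSpace ℝ (Fin 3))
    (x y : EuclideanSpace ℝ (Fin 3)) : ℝ :=
  ⟪ν x, ν y⟫ / (4 * Real.pi * ‖x - y‖ ^ 3)
    - 3 * (⟪ν y, x - y⟫ * ⟪ν x, x - y⟫) / (4 * Real.pi * ‖x - y‖ ^ 5)

/-- The kernel factor `q_{ij}(x,y) = ν_i(x)ν_j(x) − ν_i(y)ν_j(y)`. -/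
def normalProductKernel
    (ν : EuclideanSpace ℝ (Fin 3) → EuclideanSpace ℝ (Fin 3))
    (i j : Fin 3) (x y : EuclideanSpace ℝ (Fin 3)) : ℝ :=
  ν x i * ν x j - ν y i * ν y j

/-!
Write `r = ‖x - y‖`. The Lipschitz bound gives `|q_{ij}(x,y)| ≤ 2 ℓ_ν r`, since `q_{ij}` is a
difference of products of coordinates of unit vectors. Flatness makes both inner products
`ν(·)·(x−y)` of order `r²`, so the second term of `p` is of the same order `r⁻³` as the first,
and `|p(x,y)| ≤ (1 + 3 c_ν² r²)/(4π r³)`; boundedness gives `r ≤ 2d`. Multiplying, one power of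
`r` cancels.
-/

lemma abs_mul_apply_sub_mul_apply_le {ι : Type*} [Fintype ι] (u v : EuclideanSpace ℝ ι)
    (i j : ι) : |u i * u j - v i * v j| ≤ (‖u‖ + ‖v‖) * ‖u - v‖ := by
  have hu : |u i| ≤ ‖u‖ := PiLp.norm_apply_le u i
  have hv : |v j| ≤ ‖v‖ := PiLp.norm_apply_le v j
  have hi : |u i - v i| ≤ ‖u - v‖ := PiLp.norm_apply_le (u - v) i
  have hj : |u j - v j| ≤ ‖u - v‖ := PiLp.norm_apply_le (u - v) j
  calc |u i * u j - v i * v j| = |u i * (u j - v j) + (u i - v i) * v j| := by congr 1; ring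
    _ ≤ |u i| * |u j - v j| + |u i - v i| * |v j| := by
        rw [← abs_mul, ← abs_mul]; exact abs_add_le _ _
    _ ≤ ‖u‖ * ‖u - v‖ + ‖u - v‖ * ‖v‖ := by gcongr
    _ = (‖u‖ + ‖v‖) * ‖u - v‖ := by ring

lemma laplaceHyperKernel_eq_div
    (ν : EuclideanSpace ℝ (Fin 3) → EuclideanSpace ℝ (Fin 3))
    {x y : EuclideanSpace ℝ (Fin 3)} (hxy : x ≠ y) :
    laplaceHyperKernel ν x y
      = (⟪ν x, ν y⟫ - 3 * (⟪ν y, x - y⟫ * ⟪ν x, x - y⟫) / ‖x - y‖ ^ 2)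
          / (4 * Real.pi * ‖x - y‖ ^ 3) := by
  have hr : ‖x - y‖ ≠ 0 := norm_ne_zero_iff.mpr (sub_ne_zero.mpr hxy)
  rw [laplaceHyperKernel]
  field_simp

lemma abs_laplaceHyperKernel_le
    (ν : EuclideanSpace ℝ (Fin 3) → EuclideanSpace ℝ (Fin 3))
    {x y : EuclideanSpace ℝ (Fin 3)} (hxy : x ≠ y) (hνx : ‖ν x‖ ≤ 1) (hνy : ‖ν y‖ ≤ 1)
    {c : ℝ} (hfx : |⟪ν x, x - y⟫| ≤ c * ‖x - y‖ ^ 2) (hfy : |⟪ν y, x - y⟫| ≤ c * ‖x - y‖ ^ 2) :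
    |laplaceHyperKernel ν x y|
      ≤ (1 + 3 * c ^ 2 * ‖x - y‖ ^ 2) / (4 * Real.pi * ‖x - y‖ ^ 3) := by
  rw [laplaceHyperKernel_eq_div ν hxy]
  set r := ‖x - y‖
  have hr : 0 < r := norm_pos_iff.mpr (sub_ne_zero.mpr hxy)
  have hnormal : |⟪ν x, ν y⟫| ≤ 1 :=
    (abs_real_inner_le_norm _ _).trans (mul_le_one₀ hνx (norm_nonneg _) hνy)
  have hflat : |3 * (⟪ν y, x - y⟫ * ⟪ν x, x - y⟫) / r ^ 2| ≤ 3 * c ^ 2 * r ^ 2 := by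
    rw [abs_div, abs_of_pos (pow_pos hr 2), div_le_iff₀ (pow_pos hr 2)]
    calc |3 * (⟪ν y, x - y⟫ * ⟪ν x, x - y⟫)| = 3 * (|⟪ν y, x - y⟫| * |⟪ν x, x - y⟫|) := by
          rw [abs_mul, abs_mul, abs_of_pos three_pos]
      _ ≤ 3 * ((c * r ^ 2) * (c * r ^ 2)) := by
          gcongr
          exact (abs_nonneg _).trans hfy
      _ = 3 * c ^ 2 * r ^ 2 * r ^ 2 := by ring
  have hden : 0 < 4 * Real.pi * r ^ 3 := by have := pow_pos hr 3; positivity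
  rw [abs_div, abs_of_pos hden]
  gcongr
  exact (abs_sub _ _).trans (add_le_add hnormal hflat)

theorem kernel_pq_bound_general
    (Γ : Set (EuclideanSpace ℝ (Fin 3)))
    (ν : EuclideanSpace ℝ (Fin 3) → EuclideanSpace ℝ (Fin 3))
    (hν : ∀ z ∈ Γ, ‖ν z‖ = 1)
    (ℓ_ν : ℝ)
    (hLip : ∀ x ∈ Γ, ∀ y ∈ Γ, ‖ν x - ν y‖ ≤ ℓ_ν * ‖x - y‖)
    (c_ν : ℝ)
    (hFlat : ∀ x ∈ Γ, ∀ y ∈ Γ,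
      |⟪ν x, x - y⟫| ≤ c_ν * ‖x - y‖ ^ 2 ∧ |⟪ν y, x - y⟫| ≤ c_ν * ‖x - y‖ ^ 2)
    (d : ℝ)
    (hBdd : ∀ z ∈ Γ, ‖z‖ ≤ d)
    (i j : Fin 3)
    (x y : EuclideanSpace ℝ (Fin 3)) (hx : x ∈ Γ) (hy : y ∈ Γ) (hxy : x ≠ y) :
    |laplaceHyperKernel ν x y * normalProductKernel ν i j x y|
      ≤ 2 * ((1 + 12 * c_ν ^ 2 * d ^ 2) / (4 * Real.pi)) * ℓ_ν / ‖x - y‖ ^ 2 := by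
  set r := ‖x - y‖
  have hr : 0 < r := norm_pos_iff.mpr (sub_ne_zero.mpr hxy)
  have hr_le : r ≤ 2 * d := (norm_sub_le x y).trans (by linarith [hBdd x hx, hBdd y hy])
  have hq : |normalProductKernel ν i j x y| ≤ 2 * ℓ_ν * r := by
    have := abs_mul_apply_sub_mul_apply_le (ν x) (ν y) i j
    rw [hν x hx, hν y hy] at this
    rw [normalProductKernel]
    linarith [hLip x hx y hy]
  have hp := abs_laplaceHyperKernel_le ν hxy (hν x hx).le (hν y hy).le
    (hFlat x hx y hy).1 (hFlat x hx y hy).2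
  have hflat_le : 3 * c_ν ^ 2 * r ^ 2 ≤ 12 * c_ν ^ 2 * d ^ 2 := by
    nlinarith [pow_le_pow_left₀ hr.le hr_le 2, sq_nonneg c_ν]
  calc |laplaceHyperKernel ν x y * normalProductKernel ν i j x y|
      ≤ (1 + 12 * c_ν ^ 2 * d ^ 2) / (4 * Real.pi * r ^ 3) * (2 * ℓ_ν * r) := by
        rw [abs_mul]
        gcongr
        exact hp.trans (by gcongr)
    _ = 2 * ((1 + 12 * c_ν ^ 2 * d ^ 2) / (4 * Real.pi)) * ℓ_ν / r ^ 2 := by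
        field_simp

theorem kernel_pq_bound
    (Γ : Set (EuclideanSpace ℝ (Fin 3)))
    (ν : EuclideanSpace ℝ (Fin 3) → EuclideanSpace ℝ (Fin 3))
    (hν : ∀ z ∈ Γ, ‖ν z‖ = 1)
    (ℓ_ν : ℝ) (hℓ : 0 < ℓ_ν)
    (hLip : ∀ x ∈ Γ, ∀ y ∈ Γ, ‖ν x - ν y‖ ≤ ℓ_ν * ‖x - y‖)
    (c_ν : ℝ) (hc : 0 < c_ν)
    (hFlat : ∀ x ∈ Γ, ∀ y ∈ Γ,
      |⟪ν x, x - y⟫| ≤ c_ν * ‖x - y‖ ^ 2 ∧ |⟪ν y, x - y⟫| ≤ c_ν * ‖x - y‖ ^ 2)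
    (d : ℝ) (hd : 0 < d)
    (hBdd : ∀ z ∈ Γ, ‖z‖ ≤ d)
    (i j : Fin 3)
    (x y : EuclideanSpace ℝ (Fin 3)) (hx : x ∈ Γ) (hy : y ∈ Γ) (hxy : x ≠ y) :
    |laplaceHyperKernel ν x y * normalProductKernel ν i j x y|
      ≤ 2 * ((1 + 12 * c_ν ^ 2 * d ^ 2) / (4 * Real.pi)) * ℓ_ν / ‖x - y‖ ^ 2 :=
  kernel_pq_bound_general Γ ν hν ℓ_ν hLip c_ν hFlat d hBdd i j x y hx hy hxy
end

section
/- Assume ‖ν(z)‖ = 1 for all z ∈ Γ, the Lipschitz hypothesis (Lip) with constant ℓ_ν > 0, the flatness hypothesis (Flat) with constant c_ν > 0, and the boundedness hypothesis (Bdd) with constant d > 0. Then there exists a constant c₃ > 0 (depending only on ℓ_ν, c_ν and d) such that for all indices i, j ∈ {1,2,3} and all x₁, x₂, y ∈ Γ with x₁ ≠ y and 2‖x₁ − x₂‖ ≤ ‖x₁ − y‖, |p(x₁,y) q_{ij}(x₁,y) − p(x₂,y) q_{ij}(x₂,y)| ≤ c₃ ‖x₁ − x₂‖ / ‖x₁ −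 y‖³. -/
open scoped RealInnerProductSpace

/-!
Write `p q (x₁) − p q (x₂) = p(x₁,y) (q(x₁,y) − q(x₂,y)) + (p(x₁,y) − p(x₂,y)) q(x₂,y)`.
The factor `q` is a coboundary, `q(x₁,y) − q(x₂,y) = q(x₁,x₂)`, and for unit normals with
Lipschitz constant `ℓ` one has `|q(x,y)| ≤ 2ℓ‖x − y‖`. Flatness makes the numerator
`⟪ν y, x − y⟫⟪ν x, x − y⟫` of order `‖x − y‖⁴`, so `|p(x₁,y)| ≲ ‖x₁ − y‖⁻³`; and since
`2‖x₁ − x₂‖ ≤ ‖x₁ − y‖` keeps `‖x₂ − y‖` between `‖x₁ − y‖/2` and `3‖x₁ − y‖/2`, the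
difference `p(x₁,y) − p(x₂,y)` is `≲ ‖x₁ − x₂‖ ‖x₁ − y‖⁻⁴`. The coefficients of these bounds
are polynomials in `‖x₁ − y‖ ≤ 2d`.
-/

theorem abs_mul_sub_mul_le (a₁ a₂ b₁ b₂ : ℝ) :
    |a₁ * b₁ - a₂ * b₂| ≤ |a₁| * |b₁ - b₂| + |a₁ - a₂| * |b₂| := by
  calc |a₁ * b₁ - a₂ * b₂| = |a₁ * (b₁ - b₂) + (a₁ - a₂) * b₂| := by ring_nf
    _ ≤ |a₁| * |b₁ - b₂| + |a₁ - a₂| * |b₂| := by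
      rw [← abs_mul, ← abs_mul]; exact abs_add_le _ _

theorem abs_one_div_pow_sub_one_div_pow_le {a b : ℝ} (ha : 0 < a) (hab : 2 * |a - b| ≤ a)
    (n : ℕ) :
    |1 / a ^ (n + 1) - 1 / b ^ (n + 1)| ≤ 2 * (n + 1) * 3 ^ n * |a - b| / a ^ (n + 2) := by
  obtain ⟨hb₁, hb₂⟩ : a / 2 ≤ b ∧ b ≤ 3 * a / 2 := by
    constructor <;> linarith [abs_le.mp (show |a - b| ≤ a / 2 by linarith)]
  have hb : 0 < b := by linarith
  have hmax : max |b| |a| ≤ 3 * a / 2 := by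
    rw [abs_of_pos hb, abs_of_pos ha]; exact max_le hb₂ (by linarith)
  calc |1 / a ^ (n + 1) - 1 / b ^ (n + 1)|
      = |b ^ (n + 1) - a ^ (n + 1)| / (a ^ (n + 1) * b ^ (n + 1)) := by
        rw [div_sub_div _ _ (by positivity) (by positivity), abs_div,
          abs_of_pos (by positivity : 0 < a ^ (n + 1) * b ^ (n + 1))]
        ring_nf
    _ ≤ |a - b| * (n + 1) * (3 * a / 2) ^ n / (a ^ (n + 1) * (a / 2) ^ (n + 1)) := by
        gcongr
        calc |b ^ (n + 1) - a ^ (n + 1)| ≤ |b - a| * ↑(n + 1) * max |b| |a| ^ n :=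
              abs_pow_sub_pow_le ..
          _ ≤ |a - b| * (n + 1) * (3 * a / 2) ^ n := by
              rw [abs_sub_comm]; push_cast; gcongr
    _ = 2 * (n + 1) * 3 ^ n * |a - b| / a ^ (n + 2) := by
        rw [div_pow, div_pow, mul_pow]
        field_simp
        ring

theorem abs_div_pow_sub_div_pow_le {a₁ a₂ r s α β : ℝ} (hr : 0 < r) (hrs : 2 * |r - s| ≤ r)
    (ha₁ : |a₁| ≤ α) (ha : |a₁ - a₂| ≤ β) (n : ℕ) :
    |a₁ / r ^ (n + 1) - a₂ / s ^ (n + 1)|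
      ≤ (2 * (n + 1) * 3 ^ n * α * |r - s| + 2 ^ (n + 1) * β * r) / r ^ (n + 2) := by
  have hs : r / 2 ≤ s := by linarith [abs_le.mp (show |r - s| ≤ r / 2 by linarith)]
  have hs_inv : |1 / s ^ (n + 1)| ≤ 2 ^ (n + 1) / r ^ (n + 1) := by
    have hs₀ : 0 < s := by linarith
    calc |1 / s ^ (n + 1)| = 1 / s ^ (n + 1) := abs_of_pos (by positivity)
      _ ≤ 1 / (r / 2) ^ (n + 1) := by gcongr
      _ = 2 ^ (n + 1) / r ^ (n + 1) := by rw [div_pow, one_div_div]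
  calc |a₁ / r ^ (n + 1) - a₂ / s ^ (n + 1)|
      = |a₁ * (1 / r ^ (n + 1)) - a₂ * (1 / s ^ (n + 1))| := by simp only [mul_one_div]
    _ ≤ |a₁| * |1 / r ^ (n + 1) - 1 / s ^ (n + 1)| + |a₁ - a₂| * |1 / s ^ (n + 1)| :=
        abs_mul_sub_mul_le ..
    _ ≤ α * (2 * (n + 1) * 3 ^ n * |r - s| / r ^ (n + 2)) + β * (2 ^ (n + 1) / r ^ (n + 1)) := by
        gcongr
        · exact (abs_nonneg _).trans ha₁
        · exact abs_one_div_pow_sub_one_div_pow_le hr hrs n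
        · exact (abs_nonneg _).trans ha
    _ = (2 * (n + 1) * 3 ^ n * α * |r - s| + 2 ^ (n + 1) * β * r) / r ^ (n + 2) := by
        field_simp
        ring

theorem norm_sub_le_of_two_mul_norm_sub_le {E : Type*} [SeminormedAddCommGroup E] {x₁ x₂ y : E}
    (h : 2 * ‖x₁ - x₂‖ ≤ ‖x₁ - y‖) : ‖x₂ - y‖ ≤ 3 / 2 * ‖x₁ - y‖ := by
  have := norm_sub_le_norm_sub_add_norm_sub x₂ x₁ y
  rw [norm_sub_rev x₂ x₁] at this
  linarith

theorem abs_inner_sub_inner_le {E : Type*} [NormedAddCommGroup E] [InnerProductSpace ℝ E]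
    (u₁ u₂ v₁ v₂ : E) :
    |⟪u₁, v₁⟫ - ⟪u₂, v₂⟫| ≤ ‖u₁ - u₂‖ * ‖v₁‖ + ‖u₂‖ * ‖v₁ - v₂‖ := by
  calc |⟪u₁, v₁⟫ - ⟪u₂, v₂⟫| = |⟪u₁ - u₂, v₁⟫ + ⟪u₂, v₁ - v₂⟫| := by
        rw [inner_sub_left, inner_sub_right]; ring_nf
    _ ≤ |⟪u₁ - u₂, v₁⟫| + |⟪u₂, v₁ - v₂⟫| := abs_add_le _ _
    _ ≤ ‖u₁ - u₂‖ * ‖v₁‖ + ‖u₂‖ * ‖v₁ - v₂‖ := by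
        gcongr <;> exact abs_real_inner_le_norm _ _

theorem EuclideanSpace.abs_apply_mul_apply_sub_le {ι : Type*} [Fintype ι]
    {u v : EuclideanSpace ℝ ι} (hu : ‖u‖ ≤ 1) (hv : ‖v‖ ≤ 1) (i j : ι) :
    |u i * u j - v i * v j| ≤ 2 * ‖u - v‖ := by
  have hcoord (w : EuclideanSpace ℝ ι) (k : ι) : |w k| ≤ ‖w‖ := PiLp.norm_apply_le w k
  calc |u i * u j - v i * v j| ≤ |u i| * |u j - v j| + |u i - v i| * |v j| :=
        abs_mul_sub_mul_le ..
    _ ≤ 1 * ‖u - v‖ + ‖u - v‖ * 1 := by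
        gcongr
        · exact (hcoord u i).trans hu
        · exact hcoord (u - v) j
        · exact hcoord (u - v) i
        · exact (hcoord v j).trans hv
    _ = 2 * ‖u - v‖ := by ring

theorem abs_div_four_pi_le_of_abs_le {a b : ℝ} (h : |a| ≤ b) : |a / (4 * Real.pi)| ≤ b := by
  rw [abs_div, abs_of_pos (by positivity : (0 : ℝ) < 4 * Real.pi)]
  exact (div_le_self (abs_nonneg a) (by linarith [Real.pi_gt_three])).trans h

section Kernels

local notation "𝔼³" => EuclideanSpace ℝ (Fin 3)

variable {Γ : Set 𝔼³} {ν : 𝔼³ → 𝔼³} {ℓ c : ℝ}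

theorem normalProductKernel_sub_normalProductKernel (i j : Fin 3) (x₁ x₂ y : 𝔼³) :
    normalProductKernel ν i j x₁ y - normalProductKernel ν i j x₂ y
      = normalProductKernel ν i j x₁ x₂ := by
  simp only [normalProductKernel]; ring

theorem abs_normalProductKernel_le (hν : ∀ z ∈ Γ, ‖ν z‖ = 1)
    (hLip : ∀ x ∈ Γ, ∀ y ∈ Γ, ‖ν x - ν y‖ ≤ ℓ * ‖x - y‖) {x y : 𝔼³}
    (hx : x ∈ Γ) (hy : y ∈ Γ) (i j : Fin 3) :
    |normalProductKernel ν i j x y| ≤ 2 * ℓ * ‖x - y‖ := by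
  calc |normalProductKernel ν i j x y| ≤ 2 * ‖ν x - ν y‖ :=
        EuclideanSpace.abs_apply_mul_apply_sub_le (hν x hx).le (hν y hy).le i j
    _ ≤ 2 * ℓ * ‖x - y‖ := by rw [mul_assoc]; gcongr; exact hLip x hx y hy

theorem laplaceHyperKernel_eq (x y : 𝔼³) :
    laplaceHyperKernel ν x y = (⟪ν x, ν y⟫ / ‖x - y‖ ^ 3
      - 3 * (⟪ν y, x - y⟫ * ⟪ν x, x - y⟫) / ‖x - y‖ ^ 5) / (4 * Real.pi) := by
  simp only [laplaceHyperKernel]; ring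

theorem abs_laplaceHyperKernel_le_s8 (hν : ∀ z ∈ Γ, ‖ν z‖ = 1)
    (hFlat : ∀ x ∈ Γ, ∀ y ∈ Γ,
      |⟪ν x, x - y⟫| ≤ c * ‖x - y‖ ^ 2 ∧ |⟪ν y, x - y⟫| ≤ c * ‖x - y‖ ^ 2)
    {x y : 𝔼³} (hx : x ∈ Γ) (hy : y ∈ Γ) (hxy : x ≠ y) :
    |laplaceHyperKernel ν x y| ≤ (1 + 3 * c ^ 2 * ‖x - y‖ ^ 2) / ‖x - y‖ ^ 3 := by
  rw [laplaceHyperKernel_eq]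
  apply abs_div_four_pi_le_of_abs_le
  have hr : 0 < ‖x - y‖ := norm_sub_pos_iff.mpr hxy
  have hA : |⟪ν x, ν y⟫| ≤ 1 := by
    simpa [hν x hx, hν y hy] using abs_real_inner_le_norm (ν x) (ν y)
  obtain ⟨hG, hF⟩ := hFlat x hx y hy
  calc |⟪ν x, ν y⟫ / ‖x - y‖ ^ 3 - 3 * (⟪ν y, x - y⟫ * ⟪ν x, x - y⟫) / ‖x - y‖ ^ 5|
      ≤ |⟪ν x, ν y⟫| / ‖x - y‖ ^ 3 + 3 * (|⟪ν y, x - y⟫| * |⟪ν x, x - y⟫|) / ‖x - y‖ ^ 5 := by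
        refine (abs_sub _ _).trans_eq ?_
        rw [abs_div, abs_div, abs_mul, abs_mul, abs_of_pos (by positivity : (0 : ℝ) < 3),
          abs_of_pos (pow_pos hr 3), abs_of_pos (pow_pos hr 5)]
    _ ≤ 1 / ‖x - y‖ ^ 3 + 3 * ((c * ‖x - y‖ ^ 2) * (c * ‖x - y‖ ^ 2)) / ‖x - y‖ ^ 5 := by
        gcongr
        exact (abs_nonneg _).trans hF
    _ = (1 + 3 * c ^ 2 * ‖x - y‖ ^ 2) / ‖x - y‖ ^ 3 := by
        field_simp

theorem abs_inner_mul_inner_sub_le (hν : ∀ z ∈ Γ, ‖ν z‖ = 1)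
    (hLip : ∀ x ∈ Γ, ∀ y ∈ Γ, ‖ν x - ν y‖ ≤ ℓ * ‖x - y‖)
    (hFlat : ∀ x ∈ Γ, ∀ y ∈ Γ,
      |⟪ν x, x - y⟫| ≤ c * ‖x - y‖ ^ 2 ∧ |⟪ν y, x - y⟫| ≤ c * ‖x - y‖ ^ 2)
    (hc : 0 ≤ c) {x₁ x₂ y : 𝔼³} (hx₁ : x₁ ∈ Γ) (hx₂ : x₂ ∈ Γ) (hy : y ∈ Γ)
    (hsep : 2 * ‖x₁ - x₂‖ ≤ ‖x₁ - y‖) :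
    |⟪ν y, x₁ - y⟫ * ⟪ν x₁, x₁ - y⟫ - ⟪ν y, x₂ - y⟫ * ⟪ν x₂, x₂ - y⟫|
      ≤ c * (ℓ * ‖x₁ - y‖ + 13 / 4) * ‖x₁ - y‖ ^ 2 * ‖x₁ - x₂‖ := by
  set r := ‖x₁ - y‖
  set t := ‖x₁ - x₂‖
  have hs : ‖x₂ - y‖ ≤ 3 / 2 * r := norm_sub_le_of_two_mul_norm_sub_le hsep
  have hdiff : (x₁ - y) - (x₂ - y) = x₁ - x₂ := sub_sub_sub_cancel_right _ _ _
  have hF : |⟪ν y, x₁ - y⟫ - ⟪ν y, x₂ - y⟫| ≤ t := by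
    simpa [hdiff, hν y hy] using abs_inner_sub_inner_le (ν y) (ν y) (x₁ - y) (x₂ - y)
  have hG : |⟪ν x₁, x₁ - y⟫ - ⟪ν x₂, x₂ - y⟫| ≤ (ℓ * r + 1) * t := by
    calc |⟪ν x₁, x₁ - y⟫ - ⟪ν x₂, x₂ - y⟫| ≤ ‖ν x₁ - ν x₂‖ * r + ‖ν x₂‖ * t := by
          simpa [hdiff] using abs_inner_sub_inner_le (ν x₁) (ν x₂) (x₁ - y) (x₂ - y)
      _ ≤ (ℓ * t) * r + 1 * t := by
          rw [hν x₂ hx₂]; gcongr; exact hLip x₁ hx₁ x₂ hx₂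
      _ = (ℓ * r + 1) * t := by ring
  have hG₂ : |⟪ν x₂, x₂ - y⟫| ≤ 9 / 4 * c * r ^ 2 :=
    calc |⟪ν x₂, x₂ - y⟫| ≤ c * ‖x₂ - y‖ ^ 2 := (hFlat x₂ hx₂ y hy).1
      _ ≤ c * (3 / 2 * r) ^ 2 := by gcongr
      _ = 9 / 4 * c * r ^ 2 := by ring
  calc |⟪ν y, x₁ - y⟫ * ⟪ν x₁, x₁ - y⟫ - ⟪ν y, x₂ - y⟫ * ⟪ν x₂, x₂ - y⟫|
      ≤ |⟪ν y, x₁ - y⟫| * |⟪ν x₁, x₁ - y⟫ - ⟪ν x₂, x₂ - y⟫|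
        + |⟪ν y, x₁ - y⟫ - ⟪ν y, x₂ - y⟫| * |⟪ν x₂, x₂ - y⟫| := abs_mul_sub_mul_le ..
    _ ≤ (c * r ^ 2) * ((ℓ * r + 1) * t) + t * (9 / 4 * c * r ^ 2) := by
        gcongr
        exact (hFlat x₁ hx₁ y hy).2
    _ = c * (ℓ * r + 13 / 4) * r ^ 2 * t := by ring

theorem abs_laplaceHyperKernel_sub_le (hν : ∀ z ∈ Γ, ‖ν z‖ = 1)
    (hLip : ∀ x ∈ Γ, ∀ y ∈ Γ, ‖ν x - ν y‖ ≤ ℓ * ‖x - y‖)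
    (hFlat : ∀ x ∈ Γ, ∀ y ∈ Γ,
      |⟪ν x, x - y⟫| ≤ c * ‖x - y‖ ^ 2 ∧ |⟪ν y, x - y⟫| ≤ c * ‖x - y‖ ^ 2)
    (hc : 0 ≤ c) {x₁ x₂ y : 𝔼³} (hx₁ : x₁ ∈ Γ) (hx₂ : x₂ ∈ Γ) (hy : y ∈ Γ)
    (hne : x₁ ≠ y) (hsep : 2 * ‖x₁ - x₂‖ ≤ ‖x₁ - y‖) :
    |laplaceHyperKernel ν x₁ y - laplaceHyperKernel ν x₂ y|
      ≤ (54 + 8 * ℓ * ‖x₁ - y‖ + 96 * c * (ℓ * ‖x₁ - y‖ + 13 / 4) * ‖x₁ - y‖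
          + 2430 * c ^ 2 * ‖x₁ - y‖ ^ 2) * ‖x₁ - x₂‖ / ‖x₁ - y‖ ^ 4 := by
  rw [laplaceHyperKernel_eq, laplaceHyperKernel_eq, ← sub_div]
  apply abs_div_four_pi_le_of_abs_le
  set r := ‖x₁ - y‖
  set s := ‖x₂ - y‖
  set t := ‖x₁ - x₂‖
  have hr : 0 < r := norm_sub_pos_iff.mpr hne
  have hrs_le : |r - s| ≤ t := by
    simpa using abs_norm_sub_norm_le (x₁ - y) (x₂ - y)
  have hrs : 2 * |r - s| ≤ r := by linarith
  have hA₁ : |⟪ν x₁, ν y⟫| ≤ 1 := by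
    simpa [hν x₁ hx₁, hν y hy] using abs_real_inner_le_norm (ν x₁) (ν y)
  have hA : |⟪ν x₁, ν y⟫ - ⟪ν x₂, ν y⟫| ≤ ℓ * t := by
    calc |⟪ν x₁, ν y⟫ - ⟪ν x₂, ν y⟫| ≤ ‖ν x₁ - ν x₂‖ * ‖ν y‖ + ‖ν x₂‖ * ‖ν y - ν y‖ :=
          abs_inner_sub_inner_le ..
      _ = ‖ν x₁ - ν x₂‖ := by simp [hν y hy]
      _ ≤ ℓ * t := hLip x₁ hx₁ x₂ hx₂
  have hFG₁ : |⟪ν y, x₁ - y⟫ * ⟪ν x₁, x₁ - y⟫| ≤ (c * r ^ 2) * (c * r ^ 2) := by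
    rw [abs_mul]
    exact mul_le_mul (hFlat x₁ hx₁ y hy).2 (hFlat x₁ hx₁ y hy).1 (abs_nonneg _) (by positivity)
  have hAterm := abs_div_pow_sub_div_pow_le hr hrs hA₁ hA 2
  have hFGterm := abs_div_pow_sub_div_pow_le hr hrs hFG₁
    (abs_inner_mul_inner_sub_le hν hLip hFlat hc hx₁ hx₂ hy hsep) 4
  -- `54 = 2·3·3²` and `810 = 2·5·3⁴` come from `abs_one_div_pow_sub_one_div_pow_le`.
  norm_num at hAterm hFGterm
  calc |⟪ν x₁, ν y⟫ / r ^ 3 - 3 * (⟪ν y, x₁ - y⟫ * ⟪ν x₁, x₁ - y⟫) / r ^ 5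
        - (⟪ν x₂, ν y⟫ / s ^ 3 - 3 * (⟪ν y, x₂ - y⟫ * ⟪ν x₂, x₂ - y⟫) / s ^ 5)|
      = |(⟪ν x₁, ν y⟫ / r ^ 3 - ⟪ν x₂, ν y⟫ / s ^ 3)
          - 3 * (⟪ν y, x₁ - y⟫ * ⟪ν x₁, x₁ - y⟫ / r ^ 5
            - ⟪ν y, x₂ - y⟫ * ⟪ν x₂, x₂ - y⟫ / s ^ 5)| := by
        congr 1; ring
    _ ≤ |⟪ν x₁, ν y⟫ / r ^ 3 - ⟪ν x₂, ν y⟫ / s ^ 3|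
          + 3 * |⟪ν y, x₁ - y⟫ * ⟪ν x₁, x₁ - y⟫ / r ^ 5
            - ⟪ν y, x₂ - y⟫ * ⟪ν x₂, x₂ - y⟫ / s ^ 5| := by
        refine (abs_sub _ _).trans_eq ?_
        rw [abs_mul, abs_of_pos (by norm_num : (0 : ℝ) < 3)]
    _ ≤ (54 * t + 8 * (ℓ * t) * r) / r ^ 4
          + 3 * ((810 * (c * r ^ 2 * (c * r ^ 2)) * t
            + 32 * (c * (ℓ * r + 13 / 4) * r ^ 2 * t) * r) / r ^ 6) := by
        gcongr
        · exact hAterm.trans (by gcongr)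
        · exact hFGterm.trans (by gcongr)
    _ = (54 + 8 * ℓ * r + 96 * c * (ℓ * r + 13 / 4) * r + 2430 * c ^ 2 * r ^ 2) * t / r ^ 4 := by
        field_simp
        ring

theorem abs_laplaceHyperKernel_mul_normalProductKernel_sub_le (hν : ∀ z ∈ Γ, ‖ν z‖ = 1)
    (hLip : ∀ x ∈ Γ, ∀ y ∈ Γ, ‖ν x - ν y‖ ≤ ℓ * ‖x - y‖)
    (hFlat : ∀ x ∈ Γ, ∀ y ∈ Γ,
      |⟪ν x, x - y⟫| ≤ c * ‖x - y‖ ^ 2 ∧ |⟪ν y, x - y⟫| ≤ c * ‖x - y‖ ^ 2)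
    (hℓ : 0 ≤ ℓ) (hc : 0 ≤ c) {x₁ x₂ y : 𝔼³} (hx₁ : x₁ ∈ Γ) (hx₂ : x₂ ∈ Γ) (hy : y ∈ Γ)
    (hne : x₁ ≠ y) (hsep : 2 * ‖x₁ - x₂‖ ≤ ‖x₁ - y‖) (i j : Fin 3) :
    |laplaceHyperKernel ν x₁ y * normalProductKernel ν i j x₁ y
        - laplaceHyperKernel ν x₂ y * normalProductKernel ν i j x₂ y|
      ≤ (2 * ℓ * (1 + 3 * c ^ 2 * ‖x₁ - y‖ ^ 2) + 3 * ℓ * (54 + 8 * ℓ * ‖x₁ - y‖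
          + 96 * c * (ℓ * ‖x₁ - y‖ + 13 / 4) * ‖x₁ - y‖ + 2430 * c ^ 2 * ‖x₁ - y‖ ^ 2))
        * ‖x₁ - x₂‖ / ‖x₁ - y‖ ^ 3 := by
  set r := ‖x₁ - y‖
  set t := ‖x₁ - x₂‖
  have hr : 0 < r := norm_sub_pos_iff.mpr hne
  have hq₂ : |normalProductKernel ν i j x₂ y| ≤ 3 * ℓ * r := by
    calc |normalProductKernel ν i j x₂ y| ≤ 2 * ℓ * ‖x₂ - y‖ :=
          abs_normalProductKernel_le hν hLip hx₂ hy i j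
      _ ≤ 2 * ℓ * (3 / 2 * r) := by
          gcongr; exact norm_sub_le_of_two_mul_norm_sub_le hsep
      _ = 3 * ℓ * r := by ring
  calc |laplaceHyperKernel ν x₁ y * normalProductKernel ν i j x₁ y
          - laplaceHyperKernel ν x₂ y * normalProductKernel ν i j x₂ y|
      ≤ |laplaceHyperKernel ν x₁ y| * |normalProductKernel ν i j x₁ x₂|
        + |laplaceHyperKernel ν x₁ y - laplaceHyperKernel ν x₂ y|
          * |normalProductKernel ν i j x₂ y| := by
        rw [← normalProductKernel_sub_normalProductKernel i j x₁ x₂ y]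
        exact abs_mul_sub_mul_le ..
    _ ≤ (1 + 3 * c ^ 2 * r ^ 2) / r ^ 3 * (2 * ℓ * t)
        + (54 + 8 * ℓ * r + 96 * c * (ℓ * r + 13 / 4) * r + 2430 * c ^ 2 * r ^ 2) * t
          / r ^ 4 * (3 * ℓ * r) := by
        gcongr
        · exact abs_laplaceHyperKernel_le_s8 hν hFlat hx₁ hy hne
        · exact abs_normalProductKernel_le hν hLip hx₁ hx₂ i j
        · exact abs_laplaceHyperKernel_sub_le hν hLip hFlat hc hx₁ hx₂ hy hne hsep
    _ = _ := by field_simp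

end Kernels

theorem kernel_pq_difference_bound
    (Γ : Set (EuclideanSpace ℝ (Fin 3)))
    (ν : EuclideanSpace ℝ (Fin 3) → EuclideanSpace ℝ (Fin 3))
    (hν : ∀ z ∈ Γ, ‖ν z‖ = 1)
    (ℓ_ν : ℝ) (hℓ : 0 < ℓ_ν)
    (hLip : ∀ x ∈ Γ, ∀ y ∈ Γ, ‖ν x - ν y‖ ≤ ℓ_ν * ‖x - y‖)
    (c_ν : ℝ) (hc : 0 < c_ν)
    (hFlat : ∀ x ∈ Γ, ∀ y ∈ Γ,
      |⟪ν x, x - y⟫| ≤ c_ν * ‖x - y‖ ^ 2 ∧ |⟪ν y, x - y⟫| ≤ c_ν * ‖x - y‖ ^ 2)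
    (d : ℝ) (hd : 0 < d)
    (hBdd : ∀ z ∈ Γ, ‖z‖ ≤ d) :
    ∃ c₃ > (0 : ℝ), ∀ i j : Fin 3, ∀ x₁ ∈ Γ, ∀ x₂ ∈ Γ, ∀ y ∈ Γ,
      x₁ ≠ y → 2 * ‖x₁ - x₂‖ ≤ ‖x₁ - y‖ →
      |laplaceHyperKernel ν x₁ y * normalProductKernel ν i j x₁ y
          - laplaceHyperKernel ν x₂ y * normalProductKernel ν i j x₂ y|
        ≤ c₃ * ‖x₁ - x₂‖ / ‖x₁ - y‖ ^ 3 := by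
  set D := 2 * d
  refine ⟨2 * ℓ_ν * (1 + 3 * c_ν ^ 2 * D ^ 2) + 3 * ℓ_ν * (54 + 8 * ℓ_ν * D
    + 96 * c_ν * (ℓ_ν * D + 13 / 4) * D + 2430 * c_ν ^ 2 * D ^ 2), by positivity, ?_⟩
  intro i j x₁ hx₁ x₂ hx₂ y hy hne hsep
  have hrD : ‖x₁ - y‖ ≤ D := (norm_sub_le x₁ y).trans (by linarith [hBdd x₁ hx₁, hBdd y hy])
  calc _ ≤ _ := abs_laplaceHyperKernel_mul_normalProductKernel_sub_le hν hLip hFlat hℓ.le hc.le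
        hx₁ hx₂ hy hne hsep i j
    _ ≤ _ := by gcongr
end
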